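/- arXiv:2209.11365 — 5 statements merged into one kernel-verified Lean document; each statement's English description precedes it below -/
import Mathlib

section
/- Let E be a real vector space, let f, g : E → ℝ, let x₀, v ∈ E and D ∈ ℝ. Assume that f is concave on all of E, that g(x) ≤ f(x) for every x ∈ E, that f(x₀) = g(x₀), and that g has line derivative D at x₀ in the direction v. Then f also has line derivative D at x₀ in the direction v. -/
open Asymptotics Filter Topology

/- The remainder of `φ` at `x + h` is squeezed between `e h` and `-e (-h)`, where `e` is the
remainder of `ψ`: the upper bound comes from reflecting through `x` and using `ψ ≤ φ` at `x - h`. -/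
theorem HasDerivAt.of_le_of_add_le_two_mul {φ ψ : ℝ → ℝ} {x D : ℝ} (hψ : HasDerivAt ψ D x)
    (hle : ∀ t, ψ t ≤ φ t) (heq : φ x = ψ x) (hmid : ∀ h, φ (x + h) + φ (x - h) ≤ 2 * φ x) :
    HasDerivAt φ D x := by
  rw [hasDerivAt_iff_isLittleO_nhds_zero] at hψ ⊢
  set e : ℝ → ℝ := fun h => ψ (x + h) - ψ x - h • D
  have he_neg : (fun h => e (-h)) =o[𝓝 0] fun h => h := by
    have := hψ.comp_tendsto (neg_zero (G := ℝ) ▸ tendsto_neg (0 : ℝ))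
    exact this.trans_isBigO (isBigO_of_le _ fun h => by simp)
  have hbound : ∀ h, ‖φ (x + h) - φ x - h • D‖ ≤ ‖‖e h‖ + ‖e (-h)‖‖ := by
    intro h
    have hlow : e h ≤ φ (x + h) - φ x - h • D := by
      simp only [e, smul_eq_mul]; linarith [hle (x + h)]
    have hup : φ (x + h) - φ x - h • D ≤ -e (-h) := by
      simp only [e, smul_eq_mul, ← sub_eq_add_neg]; linarith [hle (x - h), hmid h]
    simp only [Real.norm_eq_abs]
    rw [abs_of_nonneg (a := |e h| + |e (-h)|) (by positivity), abs_le]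
    exact ⟨by linarith [neg_abs_le (e h), abs_nonneg (e (-h))],
      by linarith [neg_le_abs (e (-h)), abs_nonneg (e h)]⟩
  exact (isBigO_of_le _ hbound).trans_isLittleO (hψ.norm_left.add he_neg.norm_left)

/-- Differentiability transfer: if a concave function `f` dominates `g`, touches it at `x₀`,
and `g` has line derivative `D` at `x₀` in the direction `v`, then so does `f`. -/
theorem concave_hasLineDerivAt_of_touching
    {E : Type*} [AddCommGroup E] [Module ℝ E]
    (f g : E → ℝ) (x₀ v : E) (D : ℝ)
    (hconc : ∀ x y : E, ∀ t : ℝ, t ∈ Set.Icc (0 : ℝ) 1 →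
      t * f x + (1 - t) * f y ≤ f (t • x + (1 - t) • y))
    (hle : ∀ x : E, g x ≤ f x)
    (heq : f x₀ = g x₀)
    (hg : HasDerivAt (fun t : ℝ => g (x₀ + t • v)) D 0) :
    HasDerivAt (fun t : ℝ => f (x₀ + t • v)) D 0 := by
  refine hg.of_le_of_add_le_two_mul (fun t => hle _) (by simpa using heq) fun h => ?_
  have hmid := hconc (x₀ + h • v) (x₀ + (-h) • v) (1 / 2) (by norm_num)
  have hx₀ : (1 / 2 : ℝ) • (x₀ + h • v) + (1 - 1 / 2 : ℝ) • (x₀ + (-h) • v) = x₀ := by module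
  rw [hx₀] at hmid
  simp only [zero_add, zero_sub, zero_smul, add_zero]
  linarith
end

section
/- Let E be a real vector space. For each n ∈ ℕ let φₙ : E → ℝ be concave on all of E, and let δₙ : E → ℝ be such that for every direction w ∈ E, φₙ has line derivative δₙ(w) at 0 in the direction w. Let G : E → ℝ and D : E → ℝ be such that for every direction w ∈ E, G has line derivative D(w) at 0 in the direction w. Assume: (i) for every x ∈ E the sequence (φₙ(x))ₙ is bounded; (ii) G(x) ≤ liminf_{n→∞} φₙ(x) for every x ∈ E; (iii) φₙ(0) converges to G(0) as n → ∞. Then for every v ∈ E the sequence (δₙ(v))ₙ converges to D(v). -/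
/-!
Along the line `t ↦ t • v` concavity puts each `φ n` below its tangent line at `0`, so for `t > 0`
the difference quotient `(φ n (t • v) - φ n 0) / t` bounds `δ n v` from below. As `n → ∞` this
quotient is eventually above `(G (t • v) - G 0) / t - ε`, and letting `t → 0⁺` gives
`D v ≤ liminf δ n v`; the case `t < 0` gives `limsup δ n v ≤ D v` in the same way.
-/

open Filter Topology

lemma ConcaveOn.le_add_mul_sub_of_hasDerivAt {S : Set ℝ} {f : ℝ → ℝ} {x y f' : ℝ}
    (hf : ConcaveOn ℝ S f) (hx : x ∈ S) (hy : y ∈ S) (hd : HasDerivAt f f' x) :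
    f y ≤ f x + f' * (y - x) := by
  rcases lt_trichotomy x y with hxy | rfl | hyx
  · have := hf.slope_le_of_hasDerivAt hx hy hxy hd
    rw [slope_def_field, div_le_iff₀ (sub_pos.2 hxy)] at this
    linarith
  · simp
  · have := hf.le_slope_of_hasDerivAt hy hx hyx hd
    rw [slope_def_field, le_div_iff₀ (sub_pos.2 hyx)] at this
    linarith

lemma concaveOn_univ_of_forall_mem_Icc {E : Type*} [AddCommGroup E] [Module ℝ E] {f : E → ℝ}
    (hf : ∀ x y : E, ∀ t ∈ Set.Icc (0 : ℝ) 1, t * f x + (1 - t) * f y ≤ f (t • x + (1 - t) • y)) :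
    ConcaveOn ℝ Set.univ f := by
  refine ⟨convex_univ, fun x _ y _ a b ha hb hab => ?_⟩
  obtain rfl : b = 1 - a := by linarith
  simpa only [smul_eq_mul] using hf x y a ⟨ha, by linarith⟩

section TangentLines

variable {ι : Type*} {l : Filter ι} {f : ι → ℝ → ℝ} {d : ι → ℝ} {g : ℝ → ℝ} {D : ℝ}

-- `hg` is `g t ≤ liminf (f · t) l`, phrased so that it does not depend on the junk value of an
-- unbounded `liminf`.
lemma eventually_lt_of_lt_of_forall_le_add_mul
    (hf : ∀ i t, f i t ≤ f i 0 + d i * t) (hg : ∀ t, ∀ b < g t, ∀ᶠ i in l, b < f i t)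
    (h0 : Tendsto (fun i => f i 0) l (𝓝 (g 0))) (hD : HasDerivAt g D 0) {c : ℝ} (hc : c < D) :
    ∀ᶠ i in l, c < d i := by
  obtain ⟨t, hct, ht⟩ : ∃ t, c < slope g 0 t ∧ 0 < t :=
    (((hasDerivAt_iff_tendsto_slope.mp hD).mono_left (nhdsGT_le_nhdsNE 0)).eventually
      (lt_mem_nhds hc)).and self_mem_nhdsWithin |>.exists
  rw [slope_def_field, sub_zero, lt_div_iff₀ ht] at hct
  set m := g t - g 0 - c * t
  filter_upwards [hg t (g t - m / 2) (by linarith),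
    h0.eventually (gt_mem_nhds (show g 0 < g 0 + m / 2 by linarith))] with i hit hi0
  have hti := hf i t
  exact lt_of_mul_lt_mul_right (by linarith) ht.le

theorem tendsto_of_forall_le_add_mul
    (hf : ∀ i t, f i t ≤ f i 0 + d i * t) (hg : ∀ t, ∀ b < g t, ∀ᶠ i in l, b < f i t)
    (h0 : Tendsto (fun i => f i 0) l (𝓝 (g 0))) (hD : HasDerivAt g D 0) :
    Tendsto d l (𝓝 D) := by
  refine tendsto_order.2 ⟨fun c hc => eventually_lt_of_lt_of_forall_le_add_mul hf hg h0 hD hc,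
    fun c hc => ?_⟩
  -- Reflecting `t ↦ -t` turns upper bounds for `d` into lower bounds for `-d`.
  have hD_neg := (neg_zero (G := ℝ) ▸ hD).comp (0 : ℝ) (hasDerivAt_neg 0)
  rw [mul_neg_one] at hD_neg
  have hneg : ∀ᶠ i in l, -c < -d i :=
    eventually_lt_of_lt_of_forall_le_add_mul (f := fun i t => f i (-t)) (g := fun t => g (-t))
      (fun i t => by simpa using hf i (-t)) (fun t => hg (-t)) (by simpa using h0) hD_neg
      (neg_lt_neg hc)
  filter_upwards [hneg] with i hi
  exact neg_lt_neg_iff.1 hi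

end TangentLines

/-- Abstract variational principle behind the equidistribution theorem: derivatives of a
sequence of concave functionals touching a differentiable minorant at `0` converge to the
derivatives of the minorant. -/
theorem lineDeriv_tendsto_of_concave_liminf
    {E : Type*} [AddCommGroup E] [Module ℝ E]
    (φ : ℕ → E → ℝ) (δ : ℕ → E → ℝ) (G D : E → ℝ)
    (hconc : ∀ n : ℕ, ∀ x y : E, ∀ t : ℝ, t ∈ Set.Icc (0 : ℝ) 1 →
      t * φ n x + (1 - t) * φ n y ≤ φ n (t • x + (1 - t) • y))
    (hδ : ∀ n : ℕ, ∀ w : E,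
      HasDerivAt (fun t : ℝ => φ n ((0 : E) + t • w)) (δ n w) 0)
    (hD : ∀ w : E, HasDerivAt (fun t : ℝ => G ((0 : E) + t • w)) (D w) 0)
    (hbdd : ∀ x : E, ∃ C : ℝ, ∀ n : ℕ, |φ n x| ≤ C)
    (hle : ∀ x : E, G x ≤ Filter.liminf (fun n => φ n x) Filter.atTop)
    (h0 : Filter.Tendsto (fun n => φ n 0) Filter.atTop (nhds (G 0))) :
    ∀ v : E, Filter.Tendsto (fun n => δ n v) Filter.atTop (nhds (D v)) := by
  intro v
  refine tendsto_of_forall_le_add_mul (f := fun n t => φ n (t • v)) (g := fun t => G (t • v))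
    (fun n t => ?_) (fun t b hb => ?_) (by simpa using h0) (by simpa using hD v)
  · have hline : ConcaveOn ℝ Set.univ fun t : ℝ => φ n (t • v) :=
      (concaveOn_univ_of_forall_mem_Icc (hconc n)).comp_linearMap (.toSpanSingleton ℝ E v)
    simpa using hline.le_add_mul_sub_of_hasDerivAt trivial trivial (x := 0) (y := t)
      (by simpa using hδ n v)
  · obtain ⟨C, hC⟩ := hbdd (t • v)
    exact eventually_lt_of_lt_liminf (hb.trans_le (hle _))
      (isBoundedUnder_of ⟨-C, fun n => neg_le_of_abs_le (hC n)⟩)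
end

section
/- Let X be a nonempty compact topological space, let f : X → X be a surjective continuous map, let λ : X → ℝ be continuous, let a ∈ ℝ and let b ∈ ℝ with b > 1. If λ(f(x)) = b·λ(x) + a for all x ∈ X, then λ is constant, equal to −a/(b−1). -/
/-! Subtracting the fixed point `-a/(b-1)` of `t ↦ b t + a` turns the equation into
`μ ∘ f = b • μ`. At a maximum point `M` of `μ`, `b μ(M) = μ(f M) ≤ μ(M)` forces `μ(M) ≤ 0`;
applied to `-μ` the same argument gives `μ ≥ 0`. -/

open Set

theorem nonpos_of_comp_eq_mul {X : Type*} [TopologicalSpace X] [CompactSpace X] [Nonempty X]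
    {f : X → X} {μ : X → ℝ} {b : ℝ} (hμ : Continuous μ) (hb : 1 < b)
    (h : ∀ x, μ (f x) = b * μ x) (x : X) : μ x ≤ 0 := by
  obtain ⟨M, -, hM⟩ := isCompact_univ.exists_isMaxOn univ_nonempty hμ.continuousOn
  have hfM : b * μ M ≤ μ M := h M ▸ hM (mem_univ (f M))
  have hM_nonpos : μ M ≤ 0 := by nlinarith
  exact (hM (mem_univ x)).trans hM_nonpos

theorem eq_zero_of_comp_eq_mul {X : Type*} [TopologicalSpace X] [CompactSpace X] [Nonempty X]
    {f : X → X} {μ : X → ℝ} {b : ℝ} (hμ : Continuous μ) (hb : 1 < b)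
    (h : ∀ x, μ (f x) = b * μ x) (x : X) : μ x = 0 :=
  le_antisymm (nonpos_of_comp_eq_mul hμ hb h x) <| neg_nonpos.1 <|
    nonpos_of_comp_eq_mul (f := f) (μ := -μ) hμ.neg hb
      (fun y => by simp only [Pi.neg_apply, h, mul_neg]) x

theorem dynamic_const_general
    {X : Type*} [TopologicalSpace X] [CompactSpace X] [Nonempty X]
    (f : X → X)
    (lam : X → ℝ) (hlam : Continuous lam) (a b : ℝ) (hb : 1 < b)
    (h : ∀ x : X, lam (f x) = b * lam x + a) :
    ∀ x : X, lam x = -a / (b - 1) := by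
  have hb1 : b - 1 ≠ 0 := sub_ne_zero.2 hb.ne'
  have hshift : ∀ x, lam (f x) + a / (b - 1) = b * (lam x + a / (b - 1)) := fun x => by
    rw [h x]
    field_simp
    ring
  intro x
  have hx := eq_zero_of_comp_eq_mul (μ := fun y => lam y + a / (b - 1)) (by fun_prop) hb hshift x
  rw [neg_div]
  linarith

/-- Lemma A.1: a continuous solution of the dynamical equation `λ ∘ f = b·λ + a` on a
nonempty compact space with `f` surjective and `b > 1` is constant equal to `-a/(b-1)`. -/
theorem dynamic_const
    {X : Type*} [TopologicalSpace X] [CompactSpace X] [Nonempty X]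
    (f : X → X) (hf : Continuous f) (hsurj : Function.Surjective f)
    (lam : X → ℝ) (hlam : Continuous lam) (a b : ℝ) (hb : 1 < b)
    (h : ∀ x : X, lam (f x) = b * lam x + a) :
    ∀ x : X, lam x = -a / (b - 1) :=
  dynamic_const_general f lam hlam a b hb h
end

section
/- Let X be a topological space, x ∈ X, u : X → ℝ a continuous function with 0 ≤ u(y) for all y, u(y) < u(x) for all y ≠ x, and u(x) > 0. Let f : X → ℝ satisfy f(y) ≥ 0 for all y, let f be continuous at x, and let ε > 0. Then for every ξ ∈ X there exist an open neighborhood U_ξ of ξ and a positive integer n_ξ such that exp(−f(y)) · (u(y)/u(x))^{n_ξ} ≤ exp(−f(x) + ε) for all y ∈ U_ξ. -/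
/-!
Since `u` attains its strict maximum at `x`, the ratio `u / u x` lies in `[0, 1]`. Near `x` it is
enough to take `n = 1`: continuity of `f` at `x` gives `exp (-f y) ≤ exp (-f x + ε)`. Near a point
`ξ ≠ x` the ratio stays below some `r < 1`, so a large power of it is smaller than
`exp (-f x + ε)`, while `exp (-f y) ≤ 1` because `f ≥ 0`.
-/

open Real

lemma exists_isOpen_forall_pow_le_of_lt_one {X : Type*} [TopologicalSpace X] {g : X → ℝ}
    (hg : Continuous g) (hg0 : ∀ y, 0 ≤ g y) {ξ : X} (hξ : g ξ < 1) {δ : ℝ} (hδ : 0 < δ) :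
    ∃ U : Set X, IsOpen U ∧ ξ ∈ U ∧ ∃ n : ℕ, 0 < n ∧ ∀ y ∈ U, g y ^ n ≤ δ := by
  obtain ⟨r, hξr, hr1⟩ := exists_between hξ
  obtain ⟨n, hn⟩ := exists_pow_lt_of_lt_one hδ hr1
  refine ⟨{y | g y < r}, isOpen_lt hg continuous_const, hξr, n + 1, n.succ_pos, fun y hy => ?_⟩
  calc g y ^ (n + 1) ≤ r ^ (n + 1) := pow_le_pow_left₀ (hg0 y) (le_of_lt hy) _
    _ ≤ r ^ n := pow_le_pow_of_le_one ((hg0 ξ).trans hξr.le) hr1.le n.le_succ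
    _ ≤ δ := hn.le

/-- The claim inside the proof of the pointwise limit theorem: covering estimate for the
Fubini–Study approximation. -/
theorem fs_claim
    {X : Type*} [TopologicalSpace X] (x : X) (u : X → ℝ)
    (hu : Continuous u) (hu0 : ∀ y : X, 0 ≤ u y)
    (hlt : ∀ y : X, y ≠ x → u y < u x) (hux : 0 < u x)
    (f : X → ℝ) (hf0 : ∀ y : X, 0 ≤ f y) (hfc : ContinuousAt f x)
    (ε : ℝ) (hε : 0 < ε) :
    ∀ ξ : X, ∃ U : Set X, IsOpen U ∧ ξ ∈ U ∧ ∃ n : ℕ, 0 < n ∧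
      ∀ y ∈ U, Real.exp (-f y) * (u y / u x) ^ n ≤ Real.exp (-f x + ε) := by
  intro ξ
  have hratio0 : ∀ y, 0 ≤ u y / u x := fun y => div_nonneg (hu0 y) hux.le
  rcases eq_or_ne ξ x with rfl | hξ
  · have hratio1 : ∀ y, u y / u ξ ≤ 1 := fun y => (div_le_one hux).2 <| by
      rcases eq_or_ne y ξ with rfl | hy
      exacts [le_rfl, (hlt y hy).le]
    obtain ⟨U, hfU, hUo, hξU⟩ := mem_nhds_iff.1 (hfc (Ioi_mem_nhds (sub_lt_self (f ξ) hε)))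
    refine ⟨U, hUo, hξU, 1, one_pos, fun y hy => ?_⟩
    have hfy : f ξ - ε < f y := hfU hy
    calc exp (-f y) * (u y / u ξ) ^ 1 ≤ exp (-f y) :=
          mul_le_of_le_one_right (exp_pos _).le (by simpa using hratio1 y)
      _ ≤ exp (-f ξ + ε) := exp_le_exp.2 (by linarith)
  · obtain ⟨U, hUo, hξU, n, hn, hpow⟩ := exists_isOpen_forall_pow_le_of_lt_one
      (hu.div_const _) hratio0 ((div_lt_one hux).2 (hlt ξ hξ)) (exp_pos (-f x + ε))
    refine ⟨U, hUo, hξU, n, hn, fun y hy => ?_⟩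
    calc exp (-f y) * (u y / u x) ^ n ≤ 1 * exp (-f x + ε) :=
          mul_le_mul (exp_le_one_iff.2 (by linarith [hf0 y])) (hpow y hy)
            (pow_nonneg (hratio0 y) n) zero_le_one
      _ = exp (-f x + ε) := one_mul _
end

section
/- Let X be a nonempty compact topological space, x ∈ X, and u : X → ℝ a continuous function with 0 ≤ u(y) for all y, u(y) < u(x) for all y ≠ x, and u(x) > 0. Let f : X → ℝ satisfy f(y) ≥ 0 for all y and let f be continuous at x. Then the sequence n ↦ sup_{y∈X} exp(−f(y)) · (u(y)/u(x))^n converges, as n → ∞, to exp(−f(x)). -/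
/-!
Near `x` the weights `(u y / u x) ^ n` are at most `1`, so there the terms are controlled by
`exp (-f y)`, which is close to `exp (-f x)`; away from `x` the ratio `u y / u x` stays below some
`c < 1` by compactness, so those terms are at most `c ^ n → 0`. The value at `y = x` gives the
matching lower bound.
-/

open Filter Set Topology

namespace PeakWeight

variable {X : Type*} {x : X} {g r : X → ℝ}

lemma le_one_of_eq_one_of_lt_one (hrx : r x = 1) (hr_lt : ∀ y, y ≠ x → r y < 1) (y : X) :
    r y ≤ 1 := by
  rcases eq_or_ne y x with rfl | hy
  · exact hrx.le
  · exact (hr_lt y hy).le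

lemma mul_pow_le_self (hg0 : ∀ y, 0 ≤ g y) (hr0 : ∀ y, 0 ≤ r y) (hr1 : ∀ y, r y ≤ 1)
    (n : ℕ) (y : X) : g y * r y ^ n ≤ g y :=
  mul_le_of_le_one_right (hg0 y) (pow_le_one₀ (hr0 y) (hr1 y))

lemma bddAbove_range_mul_pow (hg : BddAbove (range g)) (hg0 : ∀ y, 0 ≤ g y)
    (hr0 : ∀ y, 0 ≤ r y) (hr1 : ∀ y, r y ≤ 1) (n : ℕ) :
    BddAbove (range fun y ↦ g y * r y ^ n) := by
  obtain ⟨C, hC⟩ := hg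
  exact ⟨C, forall_mem_range.2 fun y ↦
    (mul_pow_le_self hg0 hr0 hr1 n y).trans (hC (mem_range_self y))⟩

lemma le_ciSup_mul_pow (hg : BddAbove (range g)) (hg0 : ∀ y, 0 ≤ g y)
    (hr0 : ∀ y, 0 ≤ r y) (hrx : r x = 1) (hr_lt : ∀ y, y ≠ x → r y < 1) (n : ℕ) :
    g x ≤ ⨆ y, g y * r y ^ n := by
  have hbdd := bddAbove_range_mul_pow hg hg0 hr0 (le_one_of_eq_one_of_lt_one hrx hr_lt) n
  simpa [hrx] using le_ciSup hbdd x

lemma exists_lt_one_forall_le_of_isCompact [TopologicalSpace X] [CompactSpace X]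
    (hr : Continuous r) {U : Set X} (hU : U ∈ 𝓝 x) (hr_lt : ∀ y, y ≠ x → r y < 1) :
    ∃ c < 1, ∀ y ∉ U, r y ≤ c := by
  have hK : IsCompact (interior U)ᶜ := isOpen_interior.isClosed_compl.isCompact
  have hpos : ∀ y ∈ (interior U)ᶜ, 0 < 1 - r y := fun y hy ↦
    sub_pos.2 <| hr_lt y fun hyx ↦ hy (hyx ▸ mem_interior_iff_mem_nhds.2 hU)
  obtain ⟨δ, hδ, hδle⟩ := hK.exists_forall_le' (by fun_prop) hpos
  exact ⟨1 - δ, by linarith, fun y hy ↦ by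
    linarith [hδle y fun hy' ↦ hy (interior_subset hy')]⟩

lemma eventually_ciSup_mul_pow_lt [TopologicalSpace X] [CompactSpace X]
    (hg : BddAbove (range g)) (hg0 : ∀ y, 0 ≤ g y) (hgx : UpperSemicontinuousAt g x)
    (hr : Continuous r) (hr0 : ∀ y, 0 ≤ r y) (hrx : r x = 1) (hr_lt : ∀ y, y ≠ x → r y < 1)
    {b : ℝ} (hb : g x < b) : ∀ᶠ n in atTop, ⨆ y, g y * r y ^ n < b := by
  have : Nonempty X := ⟨x⟩
  have hr1 := le_one_of_eq_one_of_lt_one hrx hr_lt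
  obtain ⟨b', hxb', hb'b⟩ := exists_between hb
  obtain ⟨C, hC⟩ := hg
  have hC0 : 0 ≤ C := (hg0 x).trans (hC (mem_range_self x))
  obtain ⟨c, hc1, hc⟩ := exists_lt_one_forall_le_of_isCompact hr (hgx b' hxb') hr_lt
  have hc0 : 0 ≤ max c 0 := le_max_right c 0
  have hpow : Tendsto (fun n : ℕ ↦ C * max c 0 ^ n) atTop (𝓝 0) := by
    simpa using (tendsto_pow_atTop_nhds_zero_of_lt_one hc0 (max_lt hc1 one_pos)).const_mul C
  filter_upwards [hpow.eventually (gt_mem_nhds ((hg0 x).trans_lt hxb'))] with n hn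
  refine (ciSup_le fun y ↦ ?_).trans_lt hb'b
  by_cases hy : g y < b'
  · exact (mul_pow_le_self hg0 hr0 hr1 n y).trans hy.le
  · calc g y * r y ^ n ≤ C * max c 0 ^ n :=
          mul_le_mul (hC (mem_range_self y))
            (pow_le_pow_left₀ (hr0 y) ((hc y hy).trans (le_max_left c 0)) n)
            (pow_nonneg (hr0 y) n) hC0
      _ ≤ b' := hn.le

theorem tendsto_ciSup_mul_pow [TopologicalSpace X] [CompactSpace X]
    (hg : BddAbove (range g)) (hg0 : ∀ y, 0 ≤ g y) (hgx : UpperSemicontinuousAt g x)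
    (hr : Continuous r) (hr0 : ∀ y, 0 ≤ r y) (hrx : r x = 1) (hr_lt : ∀ y, y ≠ x → r y < 1) :
    Tendsto (fun n : ℕ ↦ ⨆ y, g y * r y ^ n) atTop (𝓝 (g x)) :=
  tendsto_order.2
    ⟨fun _ ha ↦ Eventually.of_forall fun n ↦
      ha.trans_le (le_ciSup_mul_pow hg hg0 hr0 hrx hr_lt n),
    fun _ hb ↦ eventually_ciSup_mul_pow_lt hg hg0 hgx hr hr0 hrx hr_lt hb⟩

end PeakWeight

theorem fs_pointwise_limit_general
    {X : Type*} [TopologicalSpace X] [CompactSpace X]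
    (x : X) (u : X → ℝ)
    (hu : Continuous u) (hu0 : ∀ y : X, 0 ≤ u y)
    (hlt : ∀ y : X, y ≠ x → u y < u x) (hux : 0 < u x)
    (f : X → ℝ) (hf0 : ∀ y : X, 0 ≤ f y) (hfc : ContinuousAt f x) :
    Filter.Tendsto (fun n : ℕ => ⨆ y : X, Real.exp (-f y) * (u y / u x) ^ n)
      Filter.atTop (nhds (Real.exp (-f x))) := by
  have hexp_le_one : ∀ y, Real.exp (-f y) ≤ 1 := fun y ↦
    Real.exp_le_one_iff.2 (neg_nonpos.2 (hf0 y))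
  refine PeakWeight.tendsto_ciSup_mul_pow ⟨1, forall_mem_range.2 hexp_le_one⟩
    (fun y ↦ (Real.exp_pos _).le) (hfc.neg.rexp.upperSemicontinuousAt) (by fun_prop)
    (fun y ↦ div_nonneg (hu0 y) hux.le) (div_self hux.ne')
    fun y hy ↦ (div_lt_one hux).2 (hlt y hy)

/-- Analytic core of the pointwise limit theorem: the suprema of
`exp(-f y)·(u y / u x)^n` converge to `exp(-f x)`. -/
theorem fs_pointwise_limit
    {X : Type*} [TopologicalSpace X] [CompactSpace X] [Nonempty X]
    (x : X) (u : X → ℝ)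
    (hu : Continuous u) (hu0 : ∀ y : X, 0 ≤ u y)
    (hlt : ∀ y : X, y ≠ x → u y < u x) (hux : 0 < u x)
    (f : X → ℝ) (hf0 : ∀ y : X, 0 ≤ f y) (hfc : ContinuousAt f x) :
    Filter.Tendsto (fun n : ℕ => ⨆ y : X, Real.exp (-f y) * (u y / u x) ^ n)
      Filter.atTop (nhds (Real.exp (-f x))) :=
  fs_pointwise_limit_general x u hu hu0 hlt hux f hf0 hfc
end
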